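/- Let φ(η)(s) be the AIPW score with s = (w,u,d,y), and let η = (g1,g0,h) and η⁰ = (g1⁰,g0⁰,h⁰) satisfy: |y|, |g_j(d)|, |g_j⁰(d)| ≤ M a.s. for j = 0,1, and c ≤ h(u), h⁰(u) ≤ 1−c a.s. Then ‖φ(η)(S) − φ(η⁰)(S)‖_{L²} ≤ C·( ‖g1(D)−g1⁰(D)‖_{L²} + ‖g0(D)−g0⁰(D)‖_{L²} + ‖h(U)−h⁰(U)‖_{L²} ), where C depends only on M and c. -/

import Mathlib

/-!
Pointwise, the score is `g₁ - g₀ + (y - g₁)/h` when `w = 1` and the mirror image of this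
(swap `g₁, g₀` and replace `h` by `1 - h`) when `w = 0`. Writing
`u/a - v/b = (u - v)/a + v (b - a)/(a b)` with `a, b ≥ c` and `|v| ≤ 2M` bounds the difference of
two scores by `(1 + 1/c + 2M/c²)(|Δg₁| + |Δg₀| + |Δh|)`; integrating this bound and applying
Minkowski's inequality gives the `L²` statement.
-/

open MeasureTheory

lemma abs_div_sub_div_le {u v a b K c : ℝ} (hc : 0 < c) (ha : c ≤ a) (hb : c ≤ b)
    (hv : |v| ≤ K) : |u / a - v / b| ≤ |u - v| / c + K * |a - b| / c ^ 2 := by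
  have ha0 : 0 < a := hc.trans_le ha
  have hb0 : 0 < b := hc.trans_le hb
  have hsplit : u / a - v / b = (u - v) / a + v * (b - a) / (a * b) := by
    field_simp
    ring
  have hfirst : |(u - v) / a| ≤ |u - v| / c := by
    rw [abs_div, abs_of_pos ha0]
    exact div_le_div_of_nonneg_left (abs_nonneg _) hc ha
  have hsecond : |v * (b - a) / (a * b)| ≤ K * |a - b| / c ^ 2 := by
    rw [abs_div, abs_mul, abs_of_pos (mul_pos ha0 hb0), abs_sub_comm b a, sq]
    have hK : 0 ≤ K := (abs_nonneg v).trans hv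
    gcongr
  calc |u / a - v / b| ≤ |(u - v) / a| + |v * (b - a) / (a * b)| := hsplit ▸ abs_add_le _ _
    _ ≤ _ := add_le_add hfirst hsecond

/-- `φ(η)(w, u, d, y)` with the values `g₁(d), g₀(d), h(u)` substituted for the nuisances. -/
noncomputable def aipwScore (g1 g0 h w y : ℝ) : ℝ :=
  g1 - g0 + w / h * (y - g1) - (1 - w) / (1 - h) * (y - g0)

lemma aipwScore_one (g1 g0 h y : ℝ) : aipwScore g1 g0 h 1 y = g1 - g0 + (y - g1) / h := by
  simp only [aipwScore]
  ring

lemma aipwScore_zero (g1 g0 h y : ℝ) :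
    aipwScore g1 g0 h 0 y = -aipwScore g0 g1 (1 - h) 1 y := by
  simp only [aipwScore]
  ring

lemma abs_aipwScore_one_sub_le {K c g1 g0 g1₀ g0₀ h h₀ y : ℝ} (hc : 0 < c)
    (hh : c ≤ h) (hh₀ : c ≤ h₀) (hy : |y - g1₀| ≤ K) :
    |aipwScore g1 g0 h 1 y - aipwScore g1₀ g0₀ h₀ 1 y|
      ≤ (1 + 1 / c + K / c ^ 2) * (|g1 - g1₀| + |g0 - g0₀| + |h - h₀|) := by
  have hK : 0 ≤ K := (abs_nonneg _).trans hy
  have hratio : |(y - g1) / h - (y - g1₀) / h₀| ≤ |g1 - g1₀| / c + K * |h - h₀| / c ^ 2 := by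
    simpa [abs_sub_comm g1₀ g1] using abs_div_sub_div_le (u := y - g1) hc hh hh₀ hy
  have hdiff : aipwScore g1 g0 h 1 y - aipwScore g1₀ g0₀ h₀ 1 y
      = (g1 - g1₀) - (g0 - g0₀) + ((y - g1) / h - (y - g1₀) / h₀) := by
    rw [aipwScore_one, aipwScore_one]
    ring
  rw [hdiff]
  calc _ ≤ |g1 - g1₀| + |g0 - g0₀| + |(y - g1) / h - (y - g1₀) / h₀| := by
        have := abs_sub (g1 - g1₀) (g0 - g0₀)
        have := abs_add_le (g1 - g1₀ - (g0 - g0₀)) ((y - g1) / h - (y - g1₀) / h₀)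
        linarith
    _ ≤ |g1 - g1₀| + |g0 - g0₀| + (|g1 - g1₀| / c + K * |h - h₀| / c ^ 2) := by gcongr
    _ ≤ _ := by
      have hslack : (1 + 1 / c + K / c ^ 2) * (|g1 - g1₀| + |g0 - g0₀| + |h - h₀|)
          - (|g1 - g1₀| + |g0 - g0₀| + (|g1 - g1₀| / c + K * |h - h₀| / c ^ 2))
          = |g1 - g1₀| * (K / c ^ 2) + |g0 - g0₀| * (1 / c + K / c ^ 2)
            + |h - h₀| * (1 + 1 / c) := by
        ring
      exact sub_nonneg.mp (hslack ▸ by positivity)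

lemma abs_aipwScore_sub_le {M c g1 g0 g1₀ g0₀ h h₀ w y : ℝ} (hc : 0 < c)
    (hw : w = 0 ∨ w = 1) (hy : |y| ≤ M) (hg1₀ : |g1₀| ≤ M) (hg0₀ : |g0₀| ≤ M)
    (hh : c ≤ h) (hh' : h ≤ 1 - c) (hh₀ : c ≤ h₀) (hh₀' : h₀ ≤ 1 - c) :
    |aipwScore g1 g0 h w y - aipwScore g1₀ g0₀ h₀ w y|
      ≤ (1 + 1 / c + 2 * M / c ^ 2) * (|g1 - g1₀| + |g0 - g0₀| + |h - h₀|) := by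
  rcases hw with rfl | rfl
  · rw [aipwScore_zero, aipwScore_zero, neg_sub_neg, abs_sub_comm]
    have hmirror := abs_aipwScore_one_sub_le (K := 2 * M) (g1 := g0) (g0 := g1) (g0₀ := g1₀)
      (h := 1 - h) (h₀ := 1 - h₀) (y := y) hc (by linarith) (by linarith)
      ((abs_sub y g0₀).trans (by linarith))
    rw [sub_sub_sub_cancel_left, abs_sub_comm h₀] at hmirror
    linarith
  · exact abs_aipwScore_one_sub_le (K := 2 * M) hc hh hh₀ ((abs_sub y g1₀).trans (by linarith))

lemma eLpNorm_le_ofReal_mul_add_add {α E F : Type*} [MeasurableSpace α] {μ : Measure α}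
    [NormedAddCommGroup E] [NormedAddCommGroup F] {f : α → E} {f₁ f₂ f₃ : α → F} {C : ℝ}
    {p : ENNReal} (hp : 1 ≤ p)
    (hf₁ : AEStronglyMeasurable f₁ μ) (hf₂ : AEStronglyMeasurable f₂ μ)
    (hf₃ : AEStronglyMeasurable f₃ μ)
    (hf : ∀ᵐ x ∂μ, ‖f x‖ ≤ C * (‖f₁ x‖ + ‖f₂ x‖ + ‖f₃ x‖)) :
    eLpNorm f p μ ≤ ENNReal.ofReal C * (eLpNorm f₁ p μ + eLpNorm f₂ p μ + eLpNorm f₃ p μ) := by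
  have hsum : ∀ x, ‖‖f₁ x‖ + ‖f₂ x‖ + ‖f₃ x‖‖ = ‖f₁ x‖ + ‖f₂ x‖ + ‖f₃ x‖ := fun x =>
    Real.norm_of_nonneg (by positivity)
  calc eLpNorm f p μ
      ≤ ENNReal.ofReal C * eLpNorm (fun x => ‖f₁ x‖ + ‖f₂ x‖ + ‖f₃ x‖) p μ :=
        eLpNorm_le_mul_eLpNorm_of_ae_le_mul (by simpa only [hsum] using hf) p
    _ ≤ ENNReal.ofReal C * (eLpNorm f₁ p μ + eLpNorm f₂ p μ + eLpNorm f₃ p μ) := by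
      gcongr
      calc _ ≤ eLpNorm (fun x => ‖f₁ x‖ + ‖f₂ x‖) p μ + eLpNorm (fun x => ‖f₃ x‖) p μ :=
            eLpNorm_add_le (hf₁.norm.add hf₂.norm) hf₃.norm hp
        _ ≤ eLpNorm (fun x => ‖f₁ x‖) p μ + eLpNorm (fun x => ‖f₂ x‖) p μ
              + eLpNorm (fun x => ‖f₃ x‖) p μ := by
            gcongr
            exact eLpNorm_add_le hf₁.norm hf₂.norm hp
        _ = _ := by simp only [eLpNorm_norm]

theorem aipw_score_stability_general (M c : ℝ) (hM : 0 < M) (hc : 0 < c) :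
    ∃ C : ℝ, 0 < C ∧
      ∀ {Ω : Type} [MeasurableSpace Ω] (μ : Measure Ω) [IsProbabilityMeasure μ]
        {E F : Type} [MeasurableSpace E] [MeasurableSpace F]
        (W : Ω → ℝ) (D : Ω → E) (U : Ω → F) (Y : Ω → ℝ)
        (g1 g0 g1₀ g0₀ : E → ℝ) (h h₀ : F → ℝ),
        Measurable W → Measurable D → Measurable U → Measurable Y →
        Measurable g1 → Measurable g0 → Measurable h →
        Measurable g1₀ → Measurable g0₀ → Measurable h₀ →
        (∀ ω, W ω = 0 ∨ W ω = 1) →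
        (∀ᵐ ω ∂μ, |Y ω| ≤ M ∧ |g1 (D ω)| ≤ M ∧ |g0 (D ω)| ≤ M ∧
          |g1₀ (D ω)| ≤ M ∧ |g0₀ (D ω)| ≤ M) →
        (∀ᵐ ω ∂μ, c ≤ h (U ω) ∧ h (U ω) ≤ 1 - c ∧ c ≤ h₀ (U ω) ∧ h₀ (U ω) ≤ 1 - c) →
        eLpNorm (fun ω =>
            (g1 (D ω) - g0 (D ω)
              + (W ω / h (U ω)) * (Y ω - g1 (D ω))
              - ((1 - W ω) / (1 - h (U ω))) * (Y ω - g0 (D ω)))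
            - (g1₀ (D ω) - g0₀ (D ω)
              + (W ω / h₀ (U ω)) * (Y ω - g1₀ (D ω))
              - ((1 - W ω) / (1 - h₀ (U ω))) * (Y ω - g0₀ (D ω)))) 2 μ
          ≤ ENNReal.ofReal C *
              (eLpNorm (fun ω => g1 (D ω) - g1₀ (D ω)) 2 μ
                + eLpNorm (fun ω => g0 (D ω) - g0₀ (D ω)) 2 μ
                + eLpNorm (fun ω => h (U ω) - h₀ (U ω)) 2 μ) := by
  refine ⟨1 + 1 / c + 2 * M / c ^ 2, by positivity, ?_⟩
  intro Ω _ μ _ E F _ _ W D U Y g1 g0 g1₀ g0₀ h h₀ _ hD hU _ hg1 hg0 hh hg1₀ hg0₀ hh₀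
    hW hbound hprop
  refine eLpNorm_le_ofReal_mul_add_add one_le_two
    ((hg1.comp hD).sub (hg1₀.comp hD)).aestronglyMeasurable
    ((hg0.comp hD).sub (hg0₀.comp hD)).aestronglyMeasurable
    ((hh.comp hU).sub (hh₀.comp hU)).aestronglyMeasurable ?_
  filter_upwards [hbound, hprop] with ω ⟨hY, _, _, hg1₀ω, hg0₀ω⟩ ⟨hhω, hhω', hh₀ω, hh₀ω'⟩
  exact abs_aipwScore_sub_le (w := W ω) hc (hW ω) hY hg1₀ω hg0₀ω hhω hhω' hh₀ω hh₀ω'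

/-- Lipschitz-type stability of the AIPW score in the nuisance functions, with respect
to `L²` norms, with a constant depending only on `M` and `c`. -/
theorem aipw_score_stability (M c : ℝ) (hM : 0 < M) (hc : 0 < c) (hc2 : c < 1/2) :
    ∃ C : ℝ, 0 < C ∧
      ∀ {Ω : Type} [MeasurableSpace Ω] (μ : Measure Ω) [IsProbabilityMeasure μ]
        {E F : Type} [MeasurableSpace E] [MeasurableSpace F]
        (W : Ω → ℝ) (D : Ω → E) (U : Ω → F) (Y : Ω → ℝ)
        (g1 g0 g1₀ g0₀ : E → ℝ) (h h₀ : F → ℝ),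
        Measurable W → Measurable D → Measurable U → Measurable Y →
        Measurable g1 → Measurable g0 → Measurable h →
        Measurable g1₀ → Measurable g0₀ → Measurable h₀ →
        (∀ ω, W ω = 0 ∨ W ω = 1) →
        (∀ᵐ ω ∂μ, |Y ω| ≤ M ∧ |g1 (D ω)| ≤ M ∧ |g0 (D ω)| ≤ M ∧
          |g1₀ (D ω)| ≤ M ∧ |g0₀ (D ω)| ≤ M) →
        (∀ᵐ ω ∂μ, c ≤ h (U ω) ∧ h (U ω) ≤ 1 - c ∧ c ≤ h₀ (U ω) ∧ h₀ (U ω) ≤ 1 - c) →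
        eLpNorm (fun ω =>
            (g1 (D ω) - g0 (D ω)
              + (W ω / h (U ω)) * (Y ω - g1 (D ω))
              - ((1 - W ω) / (1 - h (U ω))) * (Y ω - g0 (D ω)))
            - (g1₀ (D ω) - g0₀ (D ω)
              + (W ω / h₀ (U ω)) * (Y ω - g1₀ (D ω))
              - ((1 - W ω) / (1 - h₀ (U ω))) * (Y ω - g0₀ (D ω)))) 2 μ
          ≤ ENNReal.ofReal C *
              (eLpNorm (fun ω => g1 (D ω) - g1₀ (D ω)) 2 μ
                + eLpNorm (fun ω => g0 (D ω) - g0₀ (D ω)) 2 μ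
                + eLpNorm (fun ω => h (U ω) - h₀ (U ω)) 2 μ) :=
  aipw_score_stability_general M c hM hc
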